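/- arXiv:2006.02857 — 2 statements merged into one kernel-verified Lean document; each statement's English description precedes it below -/
import Mathlib

section
/- Let r_d > 0, u, σ, α, β, A₁, T be reals, γ > 0, θ > 0, λ ∈ ℝ, σ_f² + σ_Q² > 0. Let h : ℝ × ℝ → ℝ admit a partial derivative h_t in the first variable and first and second partial derivatives h_m, h_{mm} in the second variable, and suppose that for all (t,m) ∈ [0,T] × ℝ: h_t(t,m) − uθe^{r_d(T−t)} + (1/2)θ²σ²e^{2r_d(T−t)} − (A₁ + m)²/(2(σ_f² + σ_Q²)) + αm·h_m(t,m) + (1/2)β²(h_m(t,m)² + h_{mm}(t,m)) = 0, and h(T,m) = 0. Define V(t,x,m) = λ − (γ/θ)·exp{−θ x e^{r_d(T−t)} + h(t,m)}. Then V(T,x,m) = λ − (γ/θ)e^{−θx} for all x, m, and for every (t,x,m) ∈ [0,T] × ℝ × ℝ: (i) the supremum over π ∈ ℝ of [π(A₁ + m) + x r_d + u]·V_x(t,x,m) + (1/2)[σ² + π²(σ_f² + σ_Q²)]·V_{xx}(t,x,m) is attained at π*(t,m) = ((A₁ + m)/(θ(σ_f² + σ_Q²)))·e^{−r_d(T−t)};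 and (ii) V_t(t,x,m) + [π*(A₁ + m) + x r_d + u]·V_x + (1/2)[σ² + (π*)²(σ_f² + σ_Q²)]·V_{xx} + αm·V_m(t,x,m) + (1/2)β²·V_{mm}(t,x,m) = 0. -/
/-!
All partial derivatives of `V = λ - (γ/θ) e^φ`, `φ(t,x,m) = -θ x e^{r_d(T-t)} + h(t,m)`, are
`-(γ/θ) e^φ` times a polynomial in the partial derivatives of `φ`. In particular `V_xx < 0`, so the
Hamiltonian is a concave quadratic in `π` whose critical point is `π*`. Substituting `π*` and
dividing by `-(γ/θ) e^φ` turns the HJB equation into the equation assumed for `h`.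
-/

open Real

theorem add_half_mul_sq_le_of_add_mul_eq_zero {K : Type*} [Field K] [LinearOrder K]
    [IsStrictOrderedRing K] {a b p₀ : K} (ha : a ≤ 0) (hp₀ : b + a * p₀ = 0) (p : K) :
    b * p + a / 2 * p ^ 2 ≤ b * p₀ + a / 2 * p₀ ^ 2 := by
  have hsq : 0 ≤ -a / 2 * (p - p₀) ^ 2 := by
    have : 0 ≤ -a := by linarith
    positivity
  linear_combination hsq + (p - p₀) * hp₀

section ConstSubMulExp

variable {c k : ℝ} {g g' : ℝ → ℝ}

theorem hasDerivAt_const_sub_mul_exp {d y : ℝ} (hg : HasDerivAt g d y) :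
    HasDerivAt (fun y => c - k * exp (g y)) (-(k * (exp (g y) * d))) y :=
  (hg.exp.const_mul k).const_sub c

theorem deriv_const_sub_mul_exp (hg : ∀ y, HasDerivAt g (g' y) y) :
    deriv (fun y => c - k * exp (g y)) = fun y => -(k * (exp (g y) * g' y)) :=
  funext fun y => (hasDerivAt_const_sub_mul_exp (hg y)).deriv

theorem deriv_deriv_const_sub_mul_exp {g'' y : ℝ} (hg : ∀ y, HasDerivAt g (g' y) y)
    (hg' : HasDerivAt g' g'' y) :
    deriv (deriv fun y => c - k * exp (g y)) y = -(k * (exp (g y) * (g' y ^ 2 + g''))) := by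
  rw [deriv_const_sub_mul_exp hg]
  exact ((((hg y).exp.mul hg').const_mul k).neg.congr_deriv (by ring)).deriv

end ConstSubMulExp

theorem stmt9_general (r_d u σ α β A₁ T γ θ lam σ_f σ_Q : ℝ)
    (hγ : γ > 0) (hθ : θ > 0) (hσ : σ_f ^ 2 + σ_Q ^ 2 > 0)
    (h ht hm hmm : ℝ → ℝ → ℝ)
    (hht : ∀ t m : ℝ, HasDerivAt (fun s => h s m) (ht t m) t)
    (hhm : ∀ t m : ℝ, HasDerivAt (fun n => h t n) (hm t m) m)
    (hhmm : ∀ t m : ℝ, HasDerivAt (fun n => hm t n) (hmm t m) m)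
    (hpde : ∀ t ∈ Set.Icc (0 : ℝ) T, ∀ m : ℝ,
      ht t m - u * θ * Real.exp (r_d * (T - t))
        + (1 / 2) * θ ^ 2 * σ ^ 2 * Real.exp (2 * r_d * (T - t))
        - (A₁ + m) ^ 2 / (2 * (σ_f ^ 2 + σ_Q ^ 2))
        + α * m * hm t m
        + (1 / 2) * β ^ 2 * ((hm t m) ^ 2 + hmm t m) = 0)
    (hterm : ∀ m : ℝ, h T m = 0) :
    let V : ℝ → ℝ → ℝ → ℝ := fun t x m =>
      lam - (γ / θ) * Real.exp (-(θ * x * Real.exp (r_d * (T - t))) + h t m)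
    let pstar : ℝ → ℝ → ℝ := fun t m =>
      (A₁ + m) / (θ * (σ_f ^ 2 + σ_Q ^ 2)) * Real.exp (-(r_d * (T - t)))
    (∀ x m : ℝ, V T x m = lam - (γ / θ) * Real.exp (-(θ * x))) ∧
    (∀ t ∈ Set.Icc (0 : ℝ) T, ∀ x m : ℝ,
      (∀ pp : ℝ,
        (pp * (A₁ + m) + x * r_d + u) * deriv (fun x' => V t x' m) x
          + (1 / 2) * (σ ^ 2 + pp ^ 2 * (σ_f ^ 2 + σ_Q ^ 2))
            * deriv (deriv (fun x' => V t x' m)) x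
        ≤ (pstar t m * (A₁ + m) + x * r_d + u) * deriv (fun x' => V t x' m) x
          + (1 / 2) * (σ ^ 2 + (pstar t m) ^ 2 * (σ_f ^ 2 + σ_Q ^ 2))
            * deriv (deriv (fun x' => V t x' m)) x) ∧
      deriv (fun s => V s x m) t
        + (pstar t m * (A₁ + m) + x * r_d + u) * deriv (fun x' => V t x' m) x
        + (1 / 2) * (σ ^ 2 + (pstar t m) ^ 2 * (σ_f ^ 2 + σ_Q ^ 2))
          * deriv (deriv (fun x' => V t x' m)) x
        + α * m * deriv (fun n => V t x n) m
        + (1 / 2) * β ^ 2 * deriv (deriv (fun n => V t x n)) m = 0) := by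
  intro V pstar
  refine ⟨fun x m => by simp [V, hterm], fun t htT x m => ?_⟩
  set E := exp (r_d * (T - t)) with hE
  have hEpos : 0 < E := exp_pos _
  set W := exp (-(θ * x * E) + h t m)
  have hφx : ∀ y, HasDerivAt (fun x' => -(θ * x' * E) + h t m) (-(θ * E)) y := fun y => by
    simpa using (((hasDerivAt_id y).const_mul θ).mul_const E).neg.add_const (h t m)
  have hφt : HasDerivAt (fun s => -(θ * x * exp (r_d * (T - s))) + h s m)
      (θ * x * r_d * E + ht t m) t := by
    have hlin : HasDerivAt (fun s => r_d * (T - s)) (-r_d) t := by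
      simpa using ((hasDerivAt_id t).const_sub T).const_mul r_d
    exact (((hlin.exp.const_mul (θ * x)).neg).add (hht t m)).congr_deriv (by ring)
  have hVx : deriv (fun x' => V t x' m) x = -(γ / θ * (W * -(θ * E))) :=
    congrFun (deriv_const_sub_mul_exp hφx) x
  have hVxx : deriv (deriv fun x' => V t x' m) x = -(γ / θ * (W * ((-(θ * E)) ^ 2 + 0))) :=
    deriv_deriv_const_sub_mul_exp hφx (hasDerivAt_const x _)
  have hVm : deriv (fun n => V t x n) m = -(γ / θ * (W * hm t m)) :=
    congrFun (deriv_const_sub_mul_exp fun n => (hhm t n).const_add _) m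
  have hVmm : deriv (deriv fun n => V t x n) m = -(γ / θ * (W * (hm t m ^ 2 + hmm t m))) :=
    deriv_deriv_const_sub_mul_exp (fun n => (hhm t n).const_add _) (hhmm t m)
  have hVt : deriv (fun s => V s x m) t = -(γ / θ * (W * (θ * x * r_d * E + ht t m))) :=
    (hasDerivAt_const_sub_mul_exp hφt).deriv
  have hpstar : pstar t m = (A₁ + m) / (θ * (σ_f ^ 2 + σ_Q ^ 2)) / E := by
    simp only [pstar, exp_neg, ← hE, div_eq_mul_inv]
  rw [hVt, hVx, hVxx, hVm, hVmm, hpstar]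
  constructor
  · intro pp
    have hconcave : (σ_f ^ 2 + σ_Q ^ 2) * -(γ / θ * (W * ((-(θ * E)) ^ 2 + 0))) ≤ 0 :=
      mul_nonpos_of_nonneg_of_nonpos hσ.le (neg_nonpos.2 (by positivity))
    have hcrit := add_half_mul_sq_le_of_add_mul_eq_zero hconcave
      (b := (A₁ + m) * -(γ / θ * (W * -(θ * E))))
      (p₀ := (A₁ + m) / (θ * (σ_f ^ 2 + σ_Q ^ 2)) / E) (by field_simp; ring) pp
    linear_combination hcrit
  · have hE2 : exp (2 * r_d * (T - t)) = E ^ 2 := by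
      rw [hE, ← exp_nat_mul]; ring_nf
    have hh := hpde t htT m
    rw [hE2, ← hE] at hh
    linear_combination (norm := skip) -(γ / θ * W) * hh
    field_simp
    ring

/-- Analytic core of Theorem 3.3: if `h(t,m)` solves the reduced HJB PDE on
`[0,T] × ℝ` with `h(T,·) = 0`, then the candidate value function
`V(t,x,m) = λ − (γ/θ)exp{−θxe^{r_d(T−t)} + h(t,m)}` satisfies the terminal
condition `V(T,x,m) = λ − (γ/θ)e^{−θx}`, the supremum in the HJB equation is
attained at `π*(t,m) = ((A₁+m)/(θ(σ_f²+σ_Q²)))e^{−r_d(T−t)}`, and `V` solves the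
HJB equation with `π = π*`. -/
theorem stmt9 (r_d u σ α β A₁ T γ θ lam σ_f σ_Q : ℝ)
    (hr : r_d > 0) (hγ : γ > 0) (hθ : θ > 0) (hσ : σ_f ^ 2 + σ_Q ^ 2 > 0)
    (h ht hm hmm : ℝ → ℝ → ℝ)
    (hht : ∀ t m : ℝ, HasDerivAt (fun s => h s m) (ht t m) t)
    (hhm : ∀ t m : ℝ, HasDerivAt (fun n => h t n) (hm t m) m)
    (hhmm : ∀ t m : ℝ, HasDerivAt (fun n => hm t n) (hmm t m) m)
    (hpde : ∀ t ∈ Set.Icc (0 : ℝ) T, ∀ m : ℝ,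
      ht t m - u * θ * Real.exp (r_d * (T - t))
        + (1 / 2) * θ ^ 2 * σ ^ 2 * Real.exp (2 * r_d * (T - t))
        - (A₁ + m) ^ 2 / (2 * (σ_f ^ 2 + σ_Q ^ 2))
        + α * m * hm t m
        + (1 / 2) * β ^ 2 * ((hm t m) ^ 2 + hmm t m) = 0)
    (hterm : ∀ m : ℝ, h T m = 0) :
    let V : ℝ → ℝ → ℝ → ℝ := fun t x m =>
      lam - (γ / θ) * Real.exp (-(θ * x * Real.exp (r_d * (T - t))) + h t m)
    let pstar : ℝ → ℝ → ℝ := fun t m =>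
      (A₁ + m) / (θ * (σ_f ^ 2 + σ_Q ^ 2)) * Real.exp (-(r_d * (T - t)))
    (∀ x m : ℝ, V T x m = lam - (γ / θ) * Real.exp (-(θ * x))) ∧
    (∀ t ∈ Set.Icc (0 : ℝ) T, ∀ x m : ℝ,
      (∀ pp : ℝ,
        (pp * (A₁ + m) + x * r_d + u) * deriv (fun x' => V t x' m) x
          + (1 / 2) * (σ ^ 2 + pp ^ 2 * (σ_f ^ 2 + σ_Q ^ 2))
            * deriv (deriv (fun x' => V t x' m)) x
        ≤ (pstar t m * (A₁ + m) + x * r_d + u) * deriv (fun x' => V t x' m) x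
          + (1 / 2) * (σ ^ 2 + (pstar t m) ^ 2 * (σ_f ^ 2 + σ_Q ^ 2))
            * deriv (deriv (fun x' => V t x' m)) x) ∧
      deriv (fun s => V s x m) t
        + (pstar t m * (A₁ + m) + x * r_d + u) * deriv (fun x' => V t x' m) x
        + (1 / 2) * (σ ^ 2 + (pstar t m) ^ 2 * (σ_f ^ 2 + σ_Q ^ 2))
          * deriv (deriv (fun x' => V t x' m)) x
        + α * m * deriv (fun n => V t x n) m
        + (1 / 2) * β ^ 2 * deriv (deriv (fun n => V t x n)) m = 0) :=
  stmt9_general r_d u σ α β A₁ T γ θ lam σ_f σ_Q hγ hθ hσ h ht hm hmm hht hhm hhmm hpde hterm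
end

section
/- Let r_d > 0, u, σ, A₁, T be reals, γ > 0, θ > 0, λ ∈ ℝ, σ_f² + σ_Q² > 0. Define f : ℝ → ℝ by f(s) = (θu/r_d)(1 − e^{r_d s}) − (θ²σ²/(4r_d))(1 − e^{2r_d s}) − (A₁²/(2(σ_f² + σ_Q²)))·s, and V(t,x) = λ − (γ/θ)·exp{−θ x e^{r_d(T−t)} + f(T−t)}. Then V(T,x) = λ − (γ/θ)e^{−θx} for all x, and for every (t,x) ∈ [0,T] × ℝ: (i) the supremum over π ∈ ℝ of [πA₁ + x r_d + u]·V_x(t,x) + (1/2)[σ² + π²(σ_f² + σ_Q²)]·V_{xx}(t,x) is attained at π*(t) = (A₁/(θ(σ_f² + σ_Q²)))·e^{−r_d(T−t)}; and (ii) V_t(t,x) + [π*(t)A₁ + x r_d + u]·V_x(t,x) + (1/2)[σ² + π*(t)²(σ_f² + σ_Q²)]·V_{xx}(t,x) = 0. -/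
/-!
Write `E = e^{r_d(T−t)}` and `G` for the exponential factor of `V(t,x)`. Then `V_x = γEG > 0`
and `V_xx = −θγE²G < 0`, so the Hamiltonian is a concave quadratic in `π` whose stationary point
`−A₁V_x / ((σ_f² + σ_Q²)V_xx)` is `π*(t)`. In the HJB equation with `π = π*` and
`V_t = −(γ/θ)G(θxr_dE − f'(T−t))`, the terms in `x` cancel because the exponent is linear in
`xE`, and `f'(T−t)` cancels all the others.
-/

open Real

theorem hamiltonian_le_of_foc (A c s S Vx Vxx p p₀ : ℝ) (hconc : S * Vxx ≤ 0)
    (hfoc : A * Vx + p₀ * (S * Vxx) = 0) :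
    (p * A + c) * Vx + 1 / 2 * (s + p ^ 2 * S) * Vxx
      ≤ (p₀ * A + c) * Vx + 1 / 2 * (s + p₀ ^ 2 * S) * Vxx := by
  have hgap : (p₀ * A + c) * Vx + 1 / 2 * (s + p₀ ^ 2 * S) * Vxx
      - ((p * A + c) * Vx + 1 / 2 * (s + p ^ 2 * S) * Vxx)
      = -(S * Vxx) / 2 * (p - p₀) ^ 2 := by
    linear_combination (p₀ - p) * hfoc
  nlinarith [mul_nonneg (neg_nonneg.2 hconc) (sq_nonneg (p - p₀))]

theorem hasDerivAt_exp_neg_mul_add (θ E c x : ℝ) :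
    HasDerivAt (fun y => exp (-(θ * y * E) + c)) (-(θ * E) * exp (-(θ * x * E) + c)) x := by
  refine ((((hasDerivAt_id x).const_mul θ).mul_const E).neg.add_const c).exp.congr_deriv ?_
  simp only [Pi.neg_apply, id]
  ring

theorem hasDerivAt_sub_div_mul_exp (lam γ θ E c x : ℝ) (hθ : θ ≠ 0) :
    HasDerivAt (fun y => lam - γ / θ * exp (-(θ * y * E) + c))
      (γ * E * exp (-(θ * x * E) + c)) x := by
  refine (((hasDerivAt_exp_neg_mul_add θ E c x).const_mul (γ / θ)).const_sub lam).congr_deriv ?_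
  field_simp

theorem deriv_sub_div_mul_exp (lam γ θ E c : ℝ) (hθ : θ ≠ 0) :
    deriv (fun y => lam - γ / θ * exp (-(θ * y * E) + c))
      = fun y => γ * E * exp (-(θ * y * E) + c) :=
  funext fun x => (hasDerivAt_sub_div_mul_exp lam γ θ E c x hθ).deriv

theorem deriv_mul_exp_neg_mul_add (γ θ E c x : ℝ) :
    deriv (fun y => γ * E * exp (-(θ * y * E) + c)) x
      = -(θ * γ * E ^ 2 * exp (-(θ * x * E) + c)) := by
  rw [((hasDerivAt_exp_neg_mul_add θ E c x).const_mul (γ * E)).deriv]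
  ring

theorem hasDerivAt_sub_div_mul_exp_comp_sub (lam γ θ r x T t F' : ℝ) {F : ℝ → ℝ}
    (hF : HasDerivAt F F' (T - t)) :
    HasDerivAt (fun s => lam - γ / θ * exp (-(θ * x * exp (r * (T - s))) + F (T - s)))
      (-(γ / θ) * exp (-(θ * x * exp (r * (T - t))) + F (T - t))
        * (θ * x * r * exp (r * (T - t)) - F')) t := by
  have hτ : HasDerivAt (fun s : ℝ => T - s) (-1) t := (hasDerivAt_id t).const_sub T
  have hE := ((hτ.const_mul r).exp.const_mul (θ * x)).neg
  refine ((((hE.add (hF.comp t hτ)).exp).const_mul (γ / θ)).const_sub lam).congr_deriv ?_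
  simp only [Pi.add_apply, Pi.neg_apply, Function.comp_apply]
  ring

theorem hasDerivAt_hjb_exponent (θ u r σ A S τ : ℝ) (hr : r ≠ 0) :
    HasDerivAt (fun s => (θ * u / r) * (1 - exp (r * s))
        - (θ ^ 2 * σ ^ 2 / (4 * r)) * (1 - exp (2 * r * s)) - (A ^ 2 / (2 * S)) * s)
      (-(θ * u * exp (r * τ)) + θ ^ 2 * σ ^ 2 / 2 * exp (r * τ) ^ 2 - A ^ 2 / (2 * S)) τ := by
  have h1 := (((hasDerivAt_id τ).const_mul r).exp.const_sub 1).const_mul (θ * u / r)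
  have h2 := (((hasDerivAt_id τ).const_mul (2 * r)).exp.const_sub 1).const_mul
    (θ ^ 2 * σ ^ 2 / (4 * r))
  have h3 := (hasDerivAt_id τ).const_mul (A ^ 2 / (2 * S))
  refine ((h1.sub h2).sub h3).congr_deriv ?_
  have hsq : exp (2 * r * τ) = exp (r * τ) ^ 2 := by rw [sq, ← exp_add]; ring_nf
  simp only [id, hsq]
  field_simp
  ring

theorem hjb_residual_eq_zero (γ θ S A x r u σ E G : ℝ) (hθ : θ ≠ 0) (hS : S ≠ 0) (hE : E ≠ 0) :
    -(γ / θ) * G * (θ * x * r * E - (-(θ * u * E) + θ ^ 2 * σ ^ 2 / 2 * E ^ 2 - A ^ 2 / (2 * S)))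
      + (A / (θ * S) * E⁻¹ * A + x * r + u) * (γ * E * G)
      + 1 / 2 * (σ ^ 2 + (A / (θ * S) * E⁻¹) ^ 2 * S) * -(θ * γ * E ^ 2 * G) = 0 := by
  field_simp
  ring

/-- Analytic content of Corollary 3.1 (exchange rate a geometric Brownian motion):
the candidate value function `V(t,x) = λ − (γ/θ)exp{−θxe^{r_d(T−t)} + f(T−t)}` with
`f(s) = (θu/r_d)(1−e^{r_d s}) − (θ²σ²/(4r_d))(1−e^{2r_d s}) − (A₁²/(2(σ_f²+σ_Q²)))s`
satisfies the terminal condition, the supremum in the HJB equation is attained at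
`π*(t) = (A₁/(θ(σ_f²+σ_Q²)))e^{−r_d(T−t)}`, and `V` solves the HJB equation. -/
theorem stmt10 (r_d u σ A₁ T γ θ lam σ_f σ_Q : ℝ)
    (hr : r_d > 0) (hγ : γ > 0) (hθ : θ > 0) (hσ : σ_f ^ 2 + σ_Q ^ 2 > 0) :
    let f : ℝ → ℝ := fun s =>
      (θ * u / r_d) * (1 - Real.exp (r_d * s))
        - (θ ^ 2 * σ ^ 2 / (4 * r_d)) * (1 - Real.exp (2 * r_d * s))
        - (A₁ ^ 2 / (2 * (σ_f ^ 2 + σ_Q ^ 2))) * s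
    let V : ℝ → ℝ → ℝ := fun t x =>
      lam - (γ / θ) * Real.exp (-(θ * x * Real.exp (r_d * (T - t))) + f (T - t))
    let pstar : ℝ → ℝ := fun t =>
      A₁ / (θ * (σ_f ^ 2 + σ_Q ^ 2)) * Real.exp (-(r_d * (T - t)))
    (∀ x : ℝ, V T x = lam - (γ / θ) * Real.exp (-(θ * x))) ∧
    (∀ t ∈ Set.Icc (0 : ℝ) T, ∀ x : ℝ,
      (∀ pp : ℝ,
        (pp * A₁ + x * r_d + u) * deriv (fun x' => V t x') x
          + (1 / 2) * (σ ^ 2 + pp ^ 2 * (σ_f ^ 2 + σ_Q ^ 2))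
            * deriv (deriv (fun x' => V t x')) x
        ≤ (pstar t * A₁ + x * r_d + u) * deriv (fun x' => V t x') x
          + (1 / 2) * (σ ^ 2 + (pstar t) ^ 2 * (σ_f ^ 2 + σ_Q ^ 2))
            * deriv (deriv (fun x' => V t x')) x) ∧
      deriv (fun s => V s x) t
        + (pstar t * A₁ + x * r_d + u) * deriv (fun x' => V t x') x
        + (1 / 2) * (σ ^ 2 + (pstar t) ^ 2 * (σ_f ^ 2 + σ_Q ^ 2))
          * deriv (deriv (fun x' => V t x')) x = 0) := by
  intro f V pstar
  refine ⟨fun x => by simp [V, f], fun t _ x => ?_⟩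
  have hVt := hasDerivAt_sub_div_mul_exp_comp_sub lam γ θ r_d x T t _ (F := f)
    (hasDerivAt_hjb_exponent θ u r_d σ A₁ (σ_f ^ 2 + σ_Q ^ 2) (T - t) hr.ne')
  simp only [V, pstar, hVt.deriv, deriv_sub_div_mul_exp _ _ _ _ _ hθ.ne',
    deriv_mul_exp_neg_mul_add, exp_neg]
  set E := exp (r_d * (T - t))
  set G := exp (-(θ * x * E) + f (T - t))
  set S := σ_f ^ 2 + σ_Q ^ 2
  have hconc : S * -(θ * γ * E ^ 2 * G) ≤ 0 :=
    mul_nonpos_of_nonneg_of_nonpos hσ.le (neg_nonpos.2 (by positivity))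
  have hfoc : A₁ * (γ * E * G) + A₁ / (θ * S) * E⁻¹ * (S * -(θ * γ * E ^ 2 * G)) = 0 := by
    field_simp
    ring
  refine ⟨fun pp => ?_, hjb_residual_eq_zero γ θ S A₁ x r_d u σ E G hθ.ne' hσ.ne' (exp_pos _).ne'⟩
  simpa only [add_assoc] using hamiltonian_le_of_foc A₁ (x * r_d + u) _ _ _ _ pp _ hconc hfoc
end
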